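/- For every real z, t > 0, and continuous φ : [0,t] → ℝ, the functional Z_s(φ) := e^{−φ(s)} A_s(φ) is invariant under T_z, i.e. Z_s(T_z(φ)) = Z_s(φ) for all 0 ≤ s ≤ t. -/

import Mathlib

open MeasureTheory Real

noncomputable def pathA (φ : ℝ → ℝ) (s : ℝ) : ℝ := ∫ u in (0:ℝ)..s, Real.exp (2 * φ u)

noncomputable def pathT (t z : ℝ) (φ : ℝ → ℝ) (s : ℝ) : ℝ :=
  φ s - Real.log (1 + (pathA φ s / pathA φ t) * (Real.exp z - 1))

noncomputable def pathZ (φ : ℝ → ℝ) (s : ℝ) : ℝ := Real.exp (-φ s) * pathA φ s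

/-!
Write `T_z φ = φ - log D` with `D = 1 + c A(φ)` and `c = (e^z - 1) / A_t(φ)`. On `[0, t]` the
quantity `D` is a convex combination of `1` and `e^z`, hence positive, and
`e^{2 T_z φ} = e^{2φ} / D² = (A(φ) / D)'`. Therefore `A_s(T_z φ) = A_s(φ) / D(s)`, while
`e^{-T_z φ(s)} = e^{-φ(s)} D(s)`, and the two factors of `D(s)` cancel in `Z_s(T_z φ)`.
-/

section pathA

variable {φ : ℝ → ℝ}

@[simp]
lemma pathA_zero (φ : ℝ → ℝ) : pathA φ 0 = 0 :=
  intervalIntegral.integral_same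

lemma hasDerivAt_pathA (hφ : Continuous φ) (u : ℝ) :
    HasDerivAt (pathA φ) (exp (2 * φ u)) u :=
  ((continuous_exp.comp (continuous_const.mul hφ)).integral_hasStrictDerivAt 0 u).hasDerivAt

lemma continuous_pathA (hφ : Continuous φ) : Continuous (pathA φ) :=
  continuous_iff_continuousAt.2 fun u => (hasDerivAt_pathA hφ u).continuousAt

lemma strictMono_pathA (hφ : Continuous φ) : StrictMono (pathA φ) :=
  strictMono_of_hasDerivAt_pos (hasDerivAt_pathA hφ) fun _ => exp_pos _

lemma pathA_sub_log_one_add_mul (hφ : Continuous φ) {c s : ℝ}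
    (hD : ∀ u ∈ Set.uIcc 0 s, 0 < 1 + c * pathA φ u) :
    pathA (fun u => φ u - log (1 + c * pathA φ u)) s = pathA φ s / (1 + c * pathA φ s) := by
  have hexp : Set.EqOn (fun u => exp (2 * (φ u - log (1 + c * pathA φ u))))
      (fun u => exp (2 * φ u) / (1 + c * pathA φ u) ^ 2) (Set.uIcc 0 s) := fun u hu => by
    dsimp only
    rw [mul_sub, exp_sub, two_mul (log _), exp_add, exp_log (hD u hu), sq]
  have hderiv : ∀ u ∈ Set.uIcc 0 s, HasDerivAt (fun v => pathA φ v / (1 + c * pathA φ v))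
      (exp (2 * φ u) / (1 + c * pathA φ u) ^ 2) u := fun u hu => by
    have hA := hasDerivAt_pathA hφ u
    refine (hA.div ((hA.const_mul c).const_add 1) (hD u hu).ne').congr_deriv ?_
    congr 1
    ring
  have hcont : ContinuousOn (fun u => exp (2 * φ u) / (1 + c * pathA φ u) ^ 2) (Set.uIcc 0 s) :=
    ((continuous_exp.comp (continuous_const.mul hφ)).continuousOn).div
      ((continuous_const.add (continuous_const.mul (continuous_pathA hφ))).pow 2).continuousOn
      fun u hu => (pow_pos (hD u hu) 2).ne'
  rw [pathA, intervalIntegral.integral_congr hexp,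
    intervalIntegral.integral_eq_sub_of_hasDerivAt hderiv hcont.intervalIntegrable]
  simp

end pathA

lemma pathT_eq (t z : ℝ) (φ : ℝ → ℝ) :
    pathT t z φ = fun u => φ u - log (1 + (exp z - 1) / pathA φ t * pathA φ u) := by
  ext u
  rw [pathT]
  ring_nf

lemma one_add_mul_pathA_pos {φ : ℝ → ℝ} (hφ : Continuous φ) {t : ℝ} (ht : 0 < t) (z : ℝ)
    {u : ℝ} (hu : 0 ≤ u) (hut : u ≤ t) :
    0 < 1 + (exp z - 1) / pathA φ t * pathA φ u := by
  have hAt : 0 < pathA φ t := pathA_zero φ ▸ strictMono_pathA hφ ht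
  have hθ0 : 0 ≤ pathA φ u / pathA φ t :=
    div_nonneg (pathA_zero φ ▸ (strictMono_pathA hφ).monotone hu) hAt.le
  have hθ1 : pathA φ u / pathA φ t ≤ 1 :=
    div_le_one_of_le₀ ((strictMono_pathA hφ).monotone hut) hAt.le
  have hconvex : 1 + (exp z - 1) / pathA φ t * pathA φ u
      = (1 - pathA φ u / pathA φ t) * 1 + pathA φ u / pathA φ t * exp z := by
    field_simp
    ring
  rw [hconvex]
  rcases hθ1.lt_or_eq with hθ1 | hθ1
  · exact add_pos_of_pos_of_nonneg (by linarith) (by positivity)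
  · simp [hθ1, exp_pos]

theorem stmt3 (z t : ℝ) (ht : 0 < t) (φ : ℝ → ℝ) (hφ : Continuous φ)
    (s : ℝ) (hs : 0 ≤ s) (hst : s ≤ t) :
    pathZ (pathT t z φ) s = pathZ φ s := by
  have hD : ∀ u ∈ Set.uIcc 0 s, 0 < 1 + (exp z - 1) / pathA φ t * pathA φ u := fun u hu => by
    rw [Set.uIcc_of_le hs] at hu
    exact one_add_mul_pathA_pos hφ ht z hu.1 (hu.2.trans hst)
  have hDs := hD s Set.right_mem_uIcc
  rw [pathZ, pathZ, pathT_eq, pathA_sub_log_one_add_mul hφ hD, neg_sub, exp_sub, exp_log hDs,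
    exp_neg, div_mul_div_comm, mul_comm (1 + _), mul_div_mul_right _ _ hDs.ne', div_eq_inv_mul]
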